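/- Let D ⊆ ℝ² be open, let ψ₁, ψ₂ : D → ℂ′ be differentiable, and let 𝒰 : D → ℂ′ satisfy Re 𝒰 = 0 pointwise (𝒰 is purely imaginary). Assume the nonlinear Dirac equations ∂_z ψ₂ + 𝒰ψ₁ = 0 and −∂_z̄ ψ₁ + 𝒰ψ₂ = 0 hold on D. Fix ε ∈ {i′, −i′} and define φ₁ := ε(ψ̄₂² + ψ₁²), φ₂ := ε·i′·(ψ̄₂² − ψ₁²), φ₃ := 2·i′·ψ₁ψ̄₂. Then ∂_z̄ φⱼ = ∂_z (φ̄ⱼ) on D for j = 1, 2, 3; equivalently, the ℂ′³-valued 1-form Φ dz + Φ̄ dz̄ with Φ = (φ₂, φ₁, φ₃) is closed, so the Weierstrass-type integral f(z) = f(z₀) + Re ∫ Φ dz defining a timelike surface in Minkowski 3-space is path-independent on simply connected domains. -/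

import Mathlib

noncomputable section

/-- Para-complex numbers modeled as the product ring ℝ × ℝ. -/
abbrev Cp : Type := ℝ × ℝ

/-- The para-complex unit i′ = (1, -1), satisfying i′² = 1. -/
def ip : Cp := (1, -1)

/-- Para-complex conjugation. -/
def pconj (z : Cp) : Cp := (z.2, z.1)

/-- Real part of a para-complex number. -/
def pRe (z : Cp) : ℝ := (z.1 + z.2) / 2

/-- Imaginary part of a para-complex number. -/
def pIm (z : Cp) : ℝ := (z.1 - z.2) / 2

/-- Embedding of ℝ into the para-complex numbers. -/
def oR (r : ℝ) : Cp := (r, r)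

/-- The exponential of the Banach algebra ℝ × ℝ (componentwise real exponential). -/
def pexp (z : Cp) : Cp := (Real.exp z.1, Real.exp z.2)

/-- The para-complex derivative ∂_z f = ½(∂ₓf + i′ ∂_y f). -/
def dz (f : Cp → Cp) (p : Cp) : Cp :=
  oR (1/2) * (fderiv ℝ f p (1, 0) + ip * fderiv ℝ f p (0, 1))

/-- The para-complex derivative ∂_z̄ f = ½(∂ₓf − i′ ∂_y f). -/
def dzbar (f : Cp → Cp) (p : Cp) : Cp :=
  oR (1/2) * (fderiv ℝ f p (1, 0) - ip * fderiv ℝ f p (0, 1))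

/-!
Conjugation on ℂ′ = ℝ × ℝ swaps the factors, so it commutes with `fderiv` and exchanges `∂_z`
and `∂_z̄`: `∂_z φ̄ = conj (∂_z̄ φ)`. Closedness of the integrand therefore says that each `∂_z̄ φⱼ`
is real. By the Leibniz rule and the Dirac equations, `∂_z̄ ψ₁ = 𝒰ψ₂` and `∂_z̄ ψ̄₂ = 𝒰ψ̄₁`, so
`∂_z̄ φ₁ = 2ε𝒰(ψ̄₁ψ̄₂ + ψ₁ψ₂)`, `∂_z̄ φ₂ = 2εi′𝒰(ψ̄₁ψ̄₂ − ψ₁ψ₂)` and `∂_z̄ φ₃ = 2i′𝒰(ψ₂ψ̄₂ + ψ₁ψ̄₁)`: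
each is a product of an even number of purely imaginary factors with real ones.
-/

section Conj

@[simp] lemma pconj_add (z w : Cp) : pconj (z + w) = pconj z + pconj w := rfl

@[simp] lemma pconj_sub (z w : Cp) : pconj (z - w) = pconj z - pconj w := rfl

@[simp] lemma pconj_mul (z w : Cp) : pconj (z * w) = pconj z * pconj w := rfl

@[simp] lemma pconj_neg (z : Cp) : pconj (-z) = -pconj z := rfl

@[simp] lemma pconj_pconj (z : Cp) : pconj (pconj z) = z := rfl

@[simp] lemma pconj_two : pconj 2 = 2 := rfl

@[simp] lemma pconj_ip : pconj ip = -ip := by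
  ext <;> simp [pconj, ip]

lemma pconj_eq_neg_iff_pRe_eq_zero (z : Cp) : pconj z = -z ↔ pRe z = 0 := by
  simp only [pconj, pRe, Prod.ext_iff, Prod.fst_neg, Prod.snd_neg]
  constructor
  · rintro ⟨h, -⟩
    linarith
  · intro h
    constructor <;> linarith

end Conj

section Derivatives

variable {f g : Cp → Cp} {p : Cp}

@[fun_prop]
lemma DifferentiableAt.pconj (hf : DifferentiableAt ℝ f p) :
    DifferentiableAt ℝ (fun r => pconj (f r)) p :=
  (ContinuousLinearEquiv.prodComm ℝ ℝ ℝ).differentiableAt.comp p hf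

lemma fderiv_pconj_apply (f : Cp → Cp) (p v : Cp) :
    fderiv ℝ (fun r => pconj (f r)) p v = pconj (fderiv ℝ f p v) := by
  change fderiv ℝ ((ContinuousLinearEquiv.prodComm ℝ ℝ ℝ) ∘ f) p v = _
  rw [ContinuousLinearEquiv.comp_fderiv]
  rfl

lemma dz_pconj (f : Cp → Cp) (p : Cp) :
    dz (fun r => pconj (f r)) p = pconj (dzbar f p) := by
  simp only [dz, dzbar, fderiv_pconj_apply]
  ext <;> simp [pconj, ip, oR]; ring

lemma dzbar_pconj (f : Cp → Cp) (p : Cp) :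
    dzbar (fun r => pconj (f r)) p = pconj (dz f p) := by
  simp only [dz, dzbar, fderiv_pconj_apply]
  ext <;> simp [pconj, ip, oR]; ring

lemma dzbar_eq_dz_pconj_iff (f : Cp → Cp) (p : Cp) :
    dzbar f p = dz (fun r => pconj (f r)) p ↔ pconj (dzbar f p) = dzbar f p := by
  rw [dz_pconj, eq_comm]

lemma dzbar_add (hf : DifferentiableAt ℝ f p) (hg : DifferentiableAt ℝ g p) :
    dzbar (fun r => f r + g r) p = dzbar f p + dzbar g p := by
  simp only [dzbar, fderiv_fun_add hf hg, add_apply]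
  ring

lemma dzbar_sub (hf : DifferentiableAt ℝ f p) (hg : DifferentiableAt ℝ g p) :
    dzbar (fun r => f r - g r) p = dzbar f p - dzbar g p := by
  simp only [dzbar, fderiv_fun_sub hf hg, sub_apply]
  ring

lemma dzbar_mul (hf : DifferentiableAt ℝ f p) (hg : DifferentiableAt ℝ g p) :
    dzbar (fun r => f r * g r) p = dzbar f p * g p + f p * dzbar g p := by
  simp only [dzbar, fderiv_fun_mul hf hg, add_apply, smul_apply, smul_eq_mul]
  ring

lemma dzbar_const_mul (c : Cp) (hg : DifferentiableAt ℝ g p) :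
    dzbar (fun r => c * g r) p = c * dzbar g p := by
  rw [dzbar_mul (differentiableAt_const c) hg]
  simp [dzbar]

lemma dzbar_sq (hf : DifferentiableAt ℝ f p) :
    dzbar (fun r => f r ^ 2) p = 2 * f p * dzbar f p := by
  simp only [sq, dzbar_mul hf hf]
  ring

end Derivatives

section DiracSolution

variable {ψ₁ ψ₂ : Cp → Cp} {q u : Cp}
  (hψ₁ : DifferentiableAt ℝ ψ₁ q) (hψ₂ : DifferentiableAt ℝ ψ₂ q)
  (h₁ : dzbar ψ₁ q = u * ψ₂ q) (h₂ : dzbar (fun r => pconj (ψ₂ r)) q = u * pconj (ψ₁ q))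
include hψ₁ hψ₂ h₁ h₂

lemma dzbar_pconj_sq_add_sq :
    dzbar (fun r => pconj (ψ₂ r) ^ 2 + ψ₁ r ^ 2) q
      = 2 * u * (pconj (ψ₁ q) * pconj (ψ₂ q) + ψ₁ q * ψ₂ q) := by
  rw [dzbar_add (by fun_prop) (by fun_prop), dzbar_sq hψ₂.pconj, dzbar_sq hψ₁, h₁, h₂]
  ring

lemma dzbar_pconj_sq_sub_sq :
    dzbar (fun r => pconj (ψ₂ r) ^ 2 - ψ₁ r ^ 2) q
      = 2 * u * (pconj (ψ₁ q) * pconj (ψ₂ q) - ψ₁ q * ψ₂ q) := by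
  rw [dzbar_sub (by fun_prop) (by fun_prop), dzbar_sq hψ₂.pconj, dzbar_sq hψ₁, h₁, h₂]
  ring

lemma dzbar_mul_pconj :
    dzbar (fun r => ψ₁ r * pconj (ψ₂ r)) q
      = u * (ψ₂ q * pconj (ψ₂ q) + ψ₁ q * pconj (ψ₁ q)) := by
  rw [dzbar_mul hψ₁ hψ₂.pconj, h₁, h₂]
  ring

end DiracSolution

/-- For solutions of the nonlinear Dirac equation with purely imaginary potential, the
Weierstrass integrand is closed: ∂_z̄ φⱼ = ∂_z φ̄ⱼ for j = 1, 2, 3, so the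
Weierstrass-type integral is path-independent on simply connected domains. -/
theorem weierstrass_integrand_closed (D : Set Cp) (hD : IsOpen D)
    (ψ₁ ψ₂ U : Cp → Cp)
    (hψ₁ : DifferentiableOn ℝ ψ₁ D) (hψ₂ : DifferentiableOn ℝ ψ₂ D)
    (hU : ∀ q, pRe (U q) = 0)
    (hDirac : ∀ q ∈ D, dz ψ₂ q + U q * ψ₁ q = 0 ∧ -(dzbar ψ₁ q) + U q * ψ₂ q = 0)
    (ε : Cp) (hε : ε = ip ∨ ε = -ip)
    (φ₁ φ₂ φ₃ : Cp → Cp)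
    (h1 : ∀ q, φ₁ q = ε * ((pconj (ψ₂ q)) ^ 2 + (ψ₁ q) ^ 2))
    (h2 : ∀ q, φ₂ q = ε * ip * ((pconj (ψ₂ q)) ^ 2 - (ψ₁ q) ^ 2))
    (h3 : ∀ q, φ₃ q = 2 * ip * ψ₁ q * pconj (ψ₂ q)) :
    ∀ q ∈ D,
      dzbar φ₁ q = dz (fun r => pconj (φ₁ r)) q ∧
      dzbar φ₂ q = dz (fun r => pconj (φ₂ r)) q ∧
      dzbar φ₃ q = dz (fun r => pconj (φ₃ r)) q := by
  intro q hq
  have hd₁ := hψ₁.differentiableAt (hD.mem_nhds hq)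
  have hd₂ := hψ₂.differentiableAt (hD.mem_nhds hq)
  obtain ⟨hDirac₂, hDirac₁⟩ := hDirac q hq
  have hUq : pconj (U q) = -U q := (pconj_eq_neg_iff_pRe_eq_zero _).mpr (hU q)
  have hε' : pconj ε = -ε := by rcases hε with rfl | rfl <;> simp
  have hdψ₁ : dzbar ψ₁ q = U q * ψ₂ q := by linear_combination -hDirac₁
  have hdψ₂ : dzbar (fun r => pconj (ψ₂ r)) q = U q * pconj (ψ₁ q) := by
    rw [dzbar_pconj, eq_neg_of_add_eq_zero_left hDirac₂]
    simp [hUq]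
  have hφ₃ : φ₃ = fun r => 2 * ip * (ψ₁ r * pconj (ψ₂ r)) := funext fun r => by rw [h3, mul_assoc]
  simp only [dzbar_eq_dz_pconj_iff, funext h1, funext h2, hφ₃]
  rw [dzbar_const_mul _ (by fun_prop), dzbar_const_mul _ (by fun_prop),
    dzbar_const_mul _ (by fun_prop),
    dzbar_pconj_sq_add_sq hd₁ hd₂ hdψ₁ hdψ₂, dzbar_pconj_sq_sub_sq hd₁ hd₂ hdψ₁ hdψ₂,
    dzbar_mul_pconj hd₁ hd₂ hdψ₁ hdψ₂]
  refine ⟨?_, ?_, ?_⟩ <;> simp only [pconj_mul, pconj_add, pconj_sub, pconj_pconj, pconj_two,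
    pconj_ip, hUq, hε'] <;> ring
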